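/- arXiv:2312.05575 — 7 statements merged into one kernel-verified Lean document; each statement's English description precedes it below -/
import Mathlib

section
/- Let ω : ℝ → ℝ be continuous with |ω(t)| ≤ K(1 + t²) for all t ∈ ℝ and some K > 0, and suppose ω has sub-linear growth at +∞, i.e. ω(t)/t → 0 as t → +∞. Then (1/t) ∫_{−∞}^t e^{s−t} ω(s) ds → 0 as t → +∞. -/
/-!
Write `∫_{-∞}^t e^{s-t} ω(s) ds = e^{-t} G(t)` with `G(t) = ∫_{-∞}^t e^s ω(s) ds`; the claim is
`G(t) = o(t e^t)`, a Stolz–Cesàro (or l'Hôpital) statement for `G' = e^t ω`. Given `ε`, choose `M`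
with `|ω(s)| ≤ ε s` for `s ≥ M`. Then `G(t) = G(M) + ∫_M^t e^s ω(s) ds`, where the constant `G(M)`
is negligible against `t e^t` and the integral is at most `ε t e^t`.
-/

open MeasureTheory Real Filter Set Asymptotics

lemma integrableOn_exp_mul_one_add_sq_Iic (c : ℝ) :
    IntegrableOn (fun s => exp s * (1 + s ^ 2)) (Iic c) := by
  have hcont : Continuous fun s : ℝ => exp s * (1 + s ^ 2) := by fun_prop
  -- `e^s (s² - 2s + 3)` is a positive antiderivative
  have hderiv (s : ℝ) :
      HasDerivAt (fun s => exp s * (s ^ 2 - 2 * s + 3)) (exp s * (1 + s ^ 2)) s := by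
    refine ((hasDerivAt_exp s).mul (((hasDerivAt_pow 2 s).sub
      ((hasDerivAt_id s).const_mul 2)).add_const 3)).congr_deriv ?_
    simp only [id_eq, Pi.sub_apply]
    ring
  refine integrableOn_Iic_of_intervalIntegral_norm_bounded (exp c * (c ^ 2 - 2 * c + 3)) c
    (fun _ => hcont.integrableOn_Ioc) tendsto_id (Eventually.of_forall fun a => ?_)
  have hnorm (s : ℝ) : ‖exp s * (1 + s ^ 2)‖ = exp s * (1 + s ^ 2) :=
    Real.norm_of_nonneg (by positivity)
  simp_rw [hnorm, id_eq]
  rw [intervalIntegral.integral_eq_sub_of_hasDerivAt (fun s _ => hderiv s)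
    (hcont.intervalIntegrable a c)]
  nlinarith [exp_pos a, sq_nonneg (a - 1)]

lemma integrableOn_exp_mul_Iic_of_abs_le {ω : ℝ → ℝ} (hω : AEStronglyMeasurable ω) {K : ℝ}
    (hbd : ∀ t, |ω t| ≤ K * (1 + t ^ 2)) (c : ℝ) :
    IntegrableOn (fun s => exp s * ω s) (Iic c) := by
  refine ((integrableOn_exp_mul_one_add_sq_Iic c).const_mul K).mono'
    (continuous_exp.aestronglyMeasurable.mul hω).restrict (Eventually.of_forall fun s => ?_)
  rw [norm_mul, Real.norm_of_nonneg (exp_pos s).le, Real.norm_eq_abs]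
  calc exp s * |ω s| ≤ exp s * (K * (1 + s ^ 2)) := by gcongr; exact hbd s
    _ = K * (exp s * (1 + s ^ 2)) := by ring

lemma norm_intervalIntegral_exp_mul_le {f : ℝ → ℝ} {a b C : ℝ} (hab : a ≤ b)
    (hf : ∀ s ∈ Icc a b, ‖f s‖ ≤ C) :
    ‖∫ s in a..b, exp s * f s‖ ≤ C * exp b := by
  have hC : 0 ≤ C := (norm_nonneg _).trans (hf a ⟨le_rfl, hab⟩)
  calc ‖∫ s in a..b, exp s * f s‖ ≤ ∫ s in a..b, C * exp s := by
        refine intervalIntegral.norm_integral_le_of_norm_le hab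
          (Eventually.of_forall fun s hs => ?_) ((continuous_exp.intervalIntegrable a b).const_mul C)
        rw [norm_mul, Real.norm_of_nonneg (exp_pos s).le, mul_comm]
        gcongr
        exact hf s (Ioc_subset_Icc_self hs)
    _ = C * (exp b - exp a) := by rw [intervalIntegral.integral_const_mul, integral_exp]
    _ ≤ C * exp b := by nlinarith [exp_pos a]

theorem isLittleO_integral_Iic_exp_mul {ω : ℝ → ℝ}
    (hint : ∀ c, IntegrableOn (fun s => exp s * ω s) (Iic c)) (hsub : ω =o[atTop] id) :
    (fun t => ∫ s in Iic t, exp s * ω s) =o[atTop] fun t => t * exp t := by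
  refine isLittleO_iff.2 fun ε hε => ?_
  obtain ⟨M, hM⟩ := eventually_atTop.1 ((hsub.bound (half_pos hε)).and (eventually_ge_atTop 0))
  have hconst : (fun _ => ∫ s in Iic M, exp s * ω s) =o[atTop] fun t => t * exp t :=
    isLittleO_const_left.2 <| Or.inr <|
      tendsto_norm_atTop_atTop.comp (tendsto_id.atTop_mul_atTop₀ tendsto_exp_atTop)
  filter_upwards [hconst.bound (half_pos hε), eventually_ge_atTop M] with t hGM hMt
  have ht : 0 ≤ t := (hM M le_rfl).2.trans hMt
  have hrest : ‖∫ s in M..t, exp s * ω s‖ ≤ ε / 2 * ‖t * exp t‖ := by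
    rw [norm_mul, Real.norm_of_nonneg ht, Real.norm_of_nonneg (exp_pos t).le, ← mul_assoc]
    refine norm_intervalIntegral_exp_mul_le hMt fun s hs => ?_
    obtain ⟨hωs, hs0⟩ := hM s hs.1
    calc ‖ω s‖ ≤ ε / 2 * ‖s‖ := hωs
      _ ≤ ε / 2 * t := by rw [Real.norm_of_nonneg hs0]; gcongr; exact hs.2
  rw [← sub_add_cancel (∫ s in Iic t, exp s * ω s) (∫ s in Iic M, exp s * ω s),
    intervalIntegral.integral_Iic_sub_Iic (hint M) (hint t)]
  calc ‖(∫ s in M..t, exp s * ω s) + ∫ s in Iic M, exp s * ω s‖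
      ≤ ε / 2 * ‖t * exp t‖ + ε / 2 * ‖t * exp t‖ := (norm_add_le _ _).trans (add_le_add hrest hGM)
    _ = ε * ‖t * exp t‖ := by ring

theorem stmt_3_general (ω : ℝ → ℝ) (hω : Continuous ω) (K : ℝ)
    (hbd : ∀ t : ℝ, |ω t| ≤ K * (1 + t ^ 2))
    (hsub : Tendsto (fun t : ℝ => ω t / t) atTop (nhds 0)) :
    Tendsto (fun t : ℝ => (1 / t) * ∫ s in Set.Iic t, Real.exp (s - t) * ω s)
      atTop (nhds 0) := by
  have hlin : ω =o[atTop] id :=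
    (isLittleO_iff_tendsto' ((eventually_ne_atTop 0).mono fun _ ht h => absurd h ht)).2 hsub
  have hint := integrableOn_exp_mul_Iic_of_abs_le hω.aestronglyMeasurable hbd
  refine (isLittleO_integral_Iic_exp_mul hint hlin).tendsto_div_nhds_zero.congr fun t => ?_
  simp_rw [exp_sub, div_mul_eq_mul_div, integral_div]
  ring

/-- If `ω` has at most quadratic growth and sub-linear growth at `+∞`, then the
time average of the convolution `∫_{−∞}^t e^{s−t} ω(s) ds` tends to zero. -/
theorem stmt_3 (ω : ℝ → ℝ) (hω : Continuous ω) (K : ℝ) (hK : 0 < K)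
    (hbd : ∀ t : ℝ, |ω t| ≤ K * (1 + t ^ 2))
    (hsub : Tendsto (fun t : ℝ => ω t / t) atTop (nhds 0)) :
    Tendsto (fun t : ℝ => (1 / t) * ∫ s in Set.Iic t, Real.exp (s - t) * ω s)
      atTop (nhds 0) :=
  stmt_3_general ω hω K hbd hsub
end

section
/- Let ω : ℝ → ℝ be continuous with |ω(t)| ≤ K(1 + t²) for all t ∈ ℝ and some K > 0, and let α ∈ (0, 1]. Suppose ω is α-Hölder continuous on every compact interval [T₁, T₂] ⊂ ℝ, i.e. for every such interval there is C > 0 with |ω(t) − ω(s)| ≤ C|t − s|^α for all s, t ∈ [T₁, T₂]. Then the function O_t := ω(t) − ∫_{−∞}^t e^{s−t} ω(s) ds is α-Hölder continuous on every compact interval [T₁, T₂] ⊂ ℝ. -/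
/-!
Write `O = ω - Y` with `Y t = ∫_{-∞}^t e^{s-t} ω(s) ds = e^{-t} ∫_{-∞}^t e^s ω(s) ds`.
Polynomial growth makes `e^s ω(s)` integrable at `-∞`, so `Y` solves `Y' = ω - Y` and is `C¹`.
Hence `Y` is Lipschitz on compact intervals, in particular `α`-Hölder there for `α ≤ 1`,
and `O` inherits the Hölder bound of `ω`.
-/

open MeasureTheory Real Set

lemma integrableOn_Iic_abs_pow_mul_exp (n : ℕ) (c : ℝ) :
    IntegrableOn (fun s : ℝ => |s| ^ n * exp s) (Iic c) := by
  simpa [IntegrableOn] using ProbabilityTheory.integrable_pow_abs_mul_exp_of_integrable_exp_mul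
    (μ := volume.restrict (Iic c)) (X := id) (v := 1) (t := 1 / 2) (by norm_num)
    (integrableOn_exp_mul_Iic (by norm_num) c) (integrableOn_exp_mul_Iic (by norm_num) c) n

lemma integrableOn_Iic_exp_mul_of_abs_le {f : ℝ → ℝ} (hf : AEStronglyMeasurable f) {K : ℝ}
    {n : ℕ} (hbd : ∀ s, |f s| ≤ K * (1 + |s| ^ n)) (c : ℝ) :
    IntegrableOn (fun s => exp s * f s) (Iic c) := by
  have hdom : IntegrableOn (fun s => K * (exp s + |s| ^ n * exp s)) (Iic c) :=
    ((integrableOn_exp_Iic c).add (integrableOn_Iic_abs_pow_mul_exp n c)).const_mul K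
  refine hdom.mono' (continuous_exp.aestronglyMeasurable.mul hf).restrict
    (ae_of_all _ fun s => ?_)
  rw [norm_mul, norm_of_nonneg (exp_pos s).le, norm_eq_abs]
  calc exp s * |f s| ≤ exp s * (K * (1 + |s| ^ n)) := by gcongr; exact hbd s
    _ = K * (exp s + |s| ^ n * exp s) := by ring

lemma hasDerivAt_integral_Iic {g : ℝ → ℝ} (hg : Continuous g)
    (hint : ∀ c, IntegrableOn g (Iic c)) (t : ℝ) :
    HasDerivAt (fun u => ∫ s in Iic u, g s) (g t) t := by
  have hsplit : (fun u => ∫ s in Iic u, g s) =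
      fun u => (∫ s in Iic 0, g s) + ∫ s in (0)..u, g s := by
    ext u
    rw [← intervalIntegral.integral_Iic_sub_Iic (hint 0) (hint u), add_sub_cancel]
  rw [hsplit]
  exact (hg.integral_hasStrictDerivAt 0 t).hasDerivAt.const_add _

noncomputable def expAverage (f : ℝ → ℝ) (t : ℝ) : ℝ := ∫ s in Iic t, exp (s - t) * f s

lemma expAverage_eq_exp_neg_mul (f : ℝ → ℝ) :
    expAverage f = fun t => exp (-t) * ∫ s in Iic t, exp s * f s := by
  ext t
  rw [expAverage, ← integral_const_mul]
  congr 1 with s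
  rw [sub_eq_neg_add, exp_add]
  ring

lemma hasDerivAt_expAverage {f : ℝ → ℝ} (hf : Continuous f)
    (hint : ∀ c, IntegrableOn (fun s => exp s * f s) (Iic c)) (t : ℝ) :
    HasDerivAt (expAverage f) (f t - expAverage f t) t := by
  have h := ((hasDerivAt_neg t).exp).mul (hasDerivAt_integral_Iic (by fun_prop) hint t)
  rw [expAverage_eq_exp_neg_mul]
  refine h.congr_deriv ?_
  rw [← mul_assoc, ← exp_add, neg_add_cancel, exp_zero]
  ring

lemma contDiff_expAverage {f : ℝ → ℝ} (hf : Continuous f)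
    (hint : ∀ c, IntegrableOn (fun s => exp s * f s) (Iic c)) : ContDiff ℝ 1 (expAverage f) := by
  have hderiv := hasDerivAt_expAverage hf hint
  have hdiff : Differentiable ℝ (expAverage f) := fun t => (hderiv t).differentiableAt
  refine contDiff_one_iff_deriv.mpr ⟨hdiff, ?_⟩
  rw [funext fun t => (hderiv t).deriv]
  exact hf.sub hdiff.continuous

def IsLocallyHolder (α : ℝ) (f : ℝ → ℝ) : Prop :=
  ∀ T₁ T₂ : ℝ, T₁ ≤ T₂ → ∃ C > 0, ∀ s ∈ Icc T₁ T₂, ∀ t ∈ Icc T₁ T₂,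
    |f t - f s| ≤ C * |t - s| ^ α

lemma IsLocallyHolder.sub {α : ℝ} {f g : ℝ → ℝ} (hf : IsLocallyHolder α f)
    (hg : IsLocallyHolder α g) : IsLocallyHolder α (fun t => f t - g t) := by
  intro T₁ T₂ hT
  obtain ⟨C₁, hC₁, hf⟩ := hf T₁ T₂ hT
  obtain ⟨C₂, hC₂, hg⟩ := hg T₁ T₂ hT
  refine ⟨C₁ + C₂, add_pos hC₁ hC₂, fun s hs t ht => ?_⟩
  calc |f t - g t - (f s - g s)| = |(f t - f s) - (g t - g s)| := by
        congr 1; ring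
    _ ≤ |f t - f s| + |g t - g s| := abs_sub _ _
    _ ≤ C₁ * |t - s| ^ α + C₂ * |t - s| ^ α := add_le_add (hf s hs t ht) (hg s hs t ht)
    _ = (C₁ + C₂) * |t - s| ^ α := by ring

lemma le_rpow_one_sub_mul_rpow {x D α : ℝ} (hx : 0 ≤ x) (hxD : x ≤ D) (hα : α ≤ 1) :
    x ≤ D ^ (1 - α) * x ^ α := by
  calc x = x ^ (1 - α) * x ^ α := by rw [← rpow_add' hx (by simp), sub_add_cancel, rpow_one]
    _ ≤ D ^ (1 - α) * x ^ α := by gcongr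

lemma LocallyLipschitz.isLocallyHolder {α : ℝ} {f : ℝ → ℝ} (hf : LocallyLipschitz f)
    (hα : α ≤ 1) : IsLocallyHolder α f := by
  intro T₁ T₂ hT
  obtain ⟨L, hL⟩ := hf.locallyLipschitzOn.exists_lipschitzOnWith_of_compact isCompact_Icc
  refine ⟨L * (T₂ - T₁) ^ (1 - α) + 1, by positivity, fun s hs t ht => ?_⟩
  have hts : |t - s| ≤ T₂ - T₁ := by simpa [Real.dist_eq] using Real.dist_le_of_mem_Icc ht hs
  calc |f t - f s| ≤ L * |t - s| := by simpa [Real.dist_eq] using hL.dist_le_mul t ht s hs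
    _ ≤ L * ((T₂ - T₁) ^ (1 - α) * |t - s| ^ α) := by
        gcongr; exact le_rpow_one_sub_mul_rpow (abs_nonneg _) hts hα
    _ ≤ (L * (T₂ - T₁) ^ (1 - α) + 1) * |t - s| ^ α := by
        rw [← mul_assoc]; gcongr; linarith

theorem stmt_5_general (ω : ℝ → ℝ) (hω : Continuous ω) (K : ℝ)
    (hbd : ∀ t : ℝ, |ω t| ≤ K * (1 + t ^ 2))
    (α : ℝ) (hα : α ∈ Set.Ioc (0:ℝ) 1)
    (hHolder : ∀ T₁ T₂ : ℝ, T₁ ≤ T₂ → ∃ C > 0, ∀ s ∈ Set.Icc T₁ T₂, ∀ t ∈ Set.Icc T₁ T₂,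
      |ω t - ω s| ≤ C * |t - s| ^ α)
    (O : ℝ → ℝ)
    (hO : ∀ t : ℝ, O t = ω t - ∫ s in Set.Iic t, Real.exp (s - t) * ω s) :
    ∀ T₁ T₂ : ℝ, T₁ ≤ T₂ → ∃ C > 0, ∀ s ∈ Set.Icc T₁ T₂, ∀ t ∈ Set.Icc T₁ T₂,
      |O t - O s| ≤ C * |t - s| ^ α := by
  have hint : ∀ c, IntegrableOn (fun s => exp s * ω s) (Iic c) :=
    integrableOn_Iic_exp_mul_of_abs_le hω.aestronglyMeasurable (n := 2)
      fun t => by simpa only [sq_abs] using hbd t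
  have hY : IsLocallyHolder α (expAverage ω) :=
    (contDiff_expAverage hω hint).locallyLipschitz.isLocallyHolder hα.2
  rw [show O = fun t => ω t - expAverage ω t from funext hO]
  exact IsLocallyHolder.sub hHolder hY

/-- The Ornstein–Uhlenbeck process inherits local `α`-Hölder continuity from the
driving path. -/
theorem stmt_5 (ω : ℝ → ℝ) (hω : Continuous ω) (K : ℝ) (hK : 0 < K)
    (hbd : ∀ t : ℝ, |ω t| ≤ K * (1 + t ^ 2))
    (α : ℝ) (hα : α ∈ Set.Ioc (0:ℝ) 1)
    (hHolder : ∀ T₁ T₂ : ℝ, T₁ ≤ T₂ → ∃ C > 0, ∀ s ∈ Set.Icc T₁ T₂, ∀ t ∈ Set.Icc T₁ T₂,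
      |ω t - ω s| ≤ C * |t - s| ^ α)
    (O : ℝ → ℝ)
    (hO : ∀ t : ℝ, O t = ω t - ∫ s in Set.Iic t, Real.exp (s - t) * ω s) :
    ∀ T₁ T₂ : ℝ, T₁ ≤ T₂ → ∃ C > 0, ∀ s ∈ Set.Icc T₁ T₂, ∀ t ∈ Set.Icc T₁ T₂,
      |O t - O s| ≤ C * |t - s| ^ α :=
  stmt_5_general ω hω K hbd α hα hHolder O hO
end

section
/- Let T > 0, α ∈ (1/2, 1], and let O : [0, T] → ℝ and X : [0, T] → ℝ^d be α-Hölder continuous. Then for every ε > 0 there exists δ > 0 such that for every partition 0 = t₀ < t₁ < ⋯ < t_m = T with mesh less than δ, ‖∑_{i=1}^m [e^{−O(t_{i−1})}(X(t_i) − X(t_{i−1})) − X(t_{i−1}) e^{−O(t_{i−1})}(O(t_i) − O(t_{i−1}))] − (e^{−O(T)} X(T) − e^{−O(0)} X(0))‖ < ε. -/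
/-!
Over a step `[s, u]` the Young term differs from the increment of `e^{-O} X` by
`-e^{-O s} (e^{-h} - 1 + h) X u + e^{-O s} h (X u - X s)` with `h = O u - O s`: a second-order
Taylor remainder of `exp` plus a product of two increments. Both are `O((u - s) ^ (2α))`, so the
defects sum to at most `K mesh^(2α - 1) T`, which vanishes with the mesh because `2α > 1`.
-/

open Real Filter Topology Set

theorem Fin.sum_succ_sub_castSucc {E : Type*} [AddCommGroup E] {m : ℕ} (f : Fin (m + 1) → E) :
    ∑ i : Fin m, (f i.succ - f i.castSucc) = f (Fin.last m) - f 0 := by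
  rw [Finset.sum_sub_distrib, ← add_sub_cancel_left (f 0) (∑ i : Fin m, f i.succ),
    ← Fin.sum_univ_succ, Fin.sum_univ_castSucc]
  abel

theorem norm_sum_sub_telescope_le {E : Type*} [SeminormedAddCommGroup E] {m : ℕ}
    (g : Fin m → E) (f : Fin (m + 1) → E) (t : Fin (m + 1) → ℝ) {c : ℝ}
    (h : ∀ i, ‖g i - (f i.succ - f i.castSucc)‖ ≤ c * (t i.succ - t i.castSucc)) :
    ‖∑ i, g i - (f (Fin.last m) - f 0)‖ ≤ c * (t (Fin.last m) - t 0) := by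
  rw [← Fin.sum_succ_sub_castSucc f, ← Fin.sum_succ_sub_castSucc t, Finset.mul_sum,
    ← Finset.sum_sub_distrib]
  exact (norm_sum_le _ _).trans (Finset.sum_le_sum fun i _ => h i)

theorem norm_le_add_of_holder {E : Type*} [SeminormedAddCommGroup E] {f : ℝ → E} {T C α : ℝ}
    (hα : 0 ≤ α) (hC : 0 ≤ C)
    (hf : ∀ s ∈ Icc (0 : ℝ) T, ∀ t ∈ Icc (0 : ℝ) T, ‖f t - f s‖ ≤ C * |t - s| ^ α)
    {v : ℝ} (hv : v ∈ Icc 0 T) : ‖f v‖ ≤ ‖f 0‖ + C * T ^ α := by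
  have h0 : (0 : ℝ) ∈ Icc 0 T := ⟨le_rfl, hv.1.trans hv.2⟩
  calc ‖f v‖ ≤ ‖f 0‖ + ‖f v - f 0‖ := norm_le_insert' _ _
    _ ≤ ‖f 0‖ + C * |v - 0| ^ α := by gcongr; exact hf 0 h0 v hv
    _ ≤ ‖f 0‖ + C * T ^ α := by
      rw [sub_zero, abs_of_nonneg hv.1]
      gcongr
      exacts [hv.1, hv.2]

theorem norm_expNeg_smul_defect_le {E : Type*} [SeminormedAddCommGroup E] [NormedSpace ℝ E]
    {a b : ℝ} (x y : E) (hab : |b - a| ≤ 1) :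
    ‖(exp (-a) • (y - x) - (exp (-a) * (b - a)) • x) - (exp (-b) • y - exp (-a) • x)‖
      ≤ exp (-a) * ((b - a) ^ 2 * ‖y‖ + |b - a| * ‖y - x‖) := by
  have hexp : exp (-b) = exp (-a) * exp (-(b - a)) := by rw [← exp_add]; ring_nf
  have htaylor : |exp (-(b - a)) - 1 - -(b - a)| ≤ (b - a) ^ 2 :=
    neg_sq (b - a) ▸ abs_exp_sub_one_sub_id_le (by rwa [abs_neg])
  have hsplit : (exp (-a) • (y - x) - (exp (-a) * (b - a)) • x) - (exp (-b) • y - exp (-a) • x)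
      = -(exp (-a) * (exp (-(b - a)) - 1 - -(b - a))) • y + (exp (-a) * (b - a)) • (y - x) := by
    rw [hexp]; module
  rw [hsplit]
  calc _ ≤ ‖-(exp (-a) * (exp (-(b - a)) - 1 - -(b - a))) • y‖
        + ‖(exp (-a) * (b - a)) • (y - x)‖ := norm_add_le _ _
    _ = exp (-a) * (|exp (-(b - a)) - 1 - -(b - a)| * ‖y‖ + |b - a| * ‖y - x‖) := by
      simp only [norm_smul, norm_neg, norm_mul, Real.norm_eq_abs, abs_exp]; ring
    _ ≤ exp (-a) * ((b - a) ^ 2 * ‖y‖ + |b - a| * ‖y - x‖) := by gcongr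

section Holder

variable {E : Type*} [SeminormedAddCommGroup E] [NormedSpace ℝ E] {O : ℝ → ℝ} {X : ℝ → E}
  {T α CO CX : ℝ}

theorem norm_expNeg_smul_defect_le_of_holder (hα : 0 < α) (hCO : 0 ≤ CO) (hCX : 0 ≤ CX)
    (hO : ∀ s ∈ Icc (0 : ℝ) T, ∀ t ∈ Icc (0 : ℝ) T, |O t - O s| ≤ CO * |t - s| ^ α)
    (hX : ∀ s ∈ Icc (0 : ℝ) T, ∀ t ∈ Icc (0 : ℝ) T, ‖X t - X s‖ ≤ CX * |t - s| ^ α)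
    {s u : ℝ} (hs : s ∈ Icc 0 T) (hu : u ∈ Icc 0 T) (hsu : s < u)
    (hsmall : CO * (u - s) ^ α ≤ 1) :
    ‖(exp (-O s) • (X u - X s) - (exp (-O s) * (O u - O s)) • X s)
        - (exp (-O u) • X u - exp (-O s) • X s)‖
      ≤ exp (|O 0| + CO * T ^ α) * (CO ^ 2 * (‖X 0‖ + CX * T ^ α) + CO * CX)
        * (u - s) ^ (2 * α) := by
  have hincr : |u - s| = u - s := abs_of_pos (sub_pos.2 hsu)
  have hOsu : |O u - O s| ≤ CO * (u - s) ^ α := hincr ▸ hO s hs u hu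
  have hXsu : ‖X u - X s‖ ≤ CX * (u - s) ^ α := hincr ▸ hX s hs u hu
  have hOs : |O s| ≤ |O 0| + CO * T ^ α := by
    simpa only [Real.norm_eq_abs] using norm_le_add_of_holder hα.le hCO (f := O)
      (by simpa only [Real.norm_eq_abs] using hO) hs
  have hXu : ‖X u‖ ≤ ‖X 0‖ + CX * T ^ α := norm_le_add_of_holder hα.le hCX hX hu
  have hsq : (O u - O s) ^ 2 ≤ (CO * (u - s) ^ α) ^ 2 := by rw [← sq_abs]; gcongr
  calc _ ≤ exp (-O s) * ((O u - O s) ^ 2 * ‖X u‖ + |O u - O s| * ‖X u - X s‖) :=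
        norm_expNeg_smul_defect_le _ _ (hOsu.trans hsmall)
    _ ≤ exp (|O 0| + CO * T ^ α) * ((CO * (u - s) ^ α) ^ 2 * (‖X 0‖ + CX * T ^ α)
          + CO * (u - s) ^ α * (CX * (u - s) ^ α)) := by
      gcongr
      exact (neg_le_abs _).trans hOs
    _ = exp (|O 0| + CO * T ^ α) * (CO ^ 2 * (‖X 0‖ + CX * T ^ α) + CO * CX)
          * ((u - s) ^ α) ^ 2 := by ring
    _ = _ := by
      rw [← rpow_mul_natCast (sub_pos.2 hsu).le, Nat.cast_two, mul_comm α]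

theorem eventually_mul_rpow_lt {p : ℝ} (hp : 0 < p) (C : ℝ) {c : ℝ} (hc : 0 < c) :
    ∀ᶠ r in 𝓝[>] (0 : ℝ), C * r ^ p < c := by
  have hcont : ContinuousAt (fun r : ℝ => C * r ^ p) 0 :=
    continuousAt_const.mul (continuousAt_rpow_const 0 p (Or.inr hp.le))
  have hlim : Tendsto (fun r : ℝ => C * r ^ p) (𝓝 0) (𝓝 0) := by
    simpa [zero_rpow hp.ne'] using hcont.tendsto
  exact nhdsWithin_le_nhds (hlim.eventually (gt_mem_nhds hc))

theorem exists_forall_norm_expNeg_smul_defect_le (hα : 1 / 2 < α) (hCO : 0 ≤ CO)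
    (hCX : 0 ≤ CX)
    (hO : ∀ s ∈ Icc (0 : ℝ) T, ∀ t ∈ Icc (0 : ℝ) T, |O t - O s| ≤ CO * |t - s| ^ α)
    (hX : ∀ s ∈ Icc (0 : ℝ) T, ∀ t ∈ Icc (0 : ℝ) T, ‖X t - X s‖ ≤ CX * |t - s| ^ α)
    {c : ℝ} (hc : 0 < c) :
    ∃ δ > 0, ∀ s ∈ Icc 0 T, ∀ u ∈ Icc 0 T, s < u → u - s < δ →
      ‖(exp (-O s) • (X u - X s) - (exp (-O s) * (O u - O s)) • X s)
          - (exp (-O u) • X u - exp (-O s) • X s)‖ ≤ c * (u - s) := by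
  have hα0 : 0 < α := by linarith
  set K := exp (|O 0| + CO * T ^ α) * (CO ^ 2 * (‖X 0‖ + CX * T ^ α) + CO * CX)
  obtain ⟨δ, hδ, hsmall⟩ := mem_nhdsGT_iff_exists_Ioo_subset.mp
    ((eventually_mul_rpow_lt hα0 CO one_pos).and
      (eventually_mul_rpow_lt (by linarith : 0 < 2 * α - 1) K hc))
  refine ⟨δ, hδ, fun s hs u hu hsu hδsu => ?_⟩
  have hΔ : 0 < u - s := sub_pos.2 hsu
  obtain ⟨hCOΔ, hKΔ⟩ := hsmall ⟨hΔ, hδsu⟩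
  calc _ ≤ K * (u - s) ^ (2 * α) :=
        norm_expNeg_smul_defect_le_of_holder hα0 hCO hCX hO hX hs hu hsu hCOΔ.le
    _ = K * (u - s) ^ (2 * α - 1) * (u - s) := by
      rw [mul_assoc K, ← rpow_add_one hΔ.ne', sub_add_cancel]
    _ ≤ c * (u - s) := by gcongr

end Holder

/-- Pathwise chain rule `d(e^{−O_t} X_t) = e^{−O_t} dX_t − e^{−O_t} X_t dO_t` in the
sense of Young (Riemann–Stieltjes) sums: the Riemann–Stieltjes sums converge to
`e^{−O(T)}X(T) − e^{−O(0)}X(0)` as the mesh of the partition tends to zero. -/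
theorem stmt_7 {d : ℕ} (T : ℝ) (hT : 0 < T) (α : ℝ) (hα : α ∈ Set.Ioc (1/2 : ℝ) 1)
    (O : ℝ → ℝ) (X : ℝ → EuclideanSpace ℝ (Fin d))
    (hO : ∃ C > 0, ∀ s ∈ Set.Icc (0:ℝ) T, ∀ t ∈ Set.Icc (0:ℝ) T,
      |O t - O s| ≤ C * |t - s| ^ α)
    (hX : ∃ C > 0, ∀ s ∈ Set.Icc (0:ℝ) T, ∀ t ∈ Set.Icc (0:ℝ) T,
      ‖X t - X s‖ ≤ C * |t - s| ^ α) :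
    ∀ ε > 0, ∃ δ > 0, ∀ (m : ℕ) (t : Fin (m + 1) → ℝ), StrictMono t →
      t 0 = 0 → t (Fin.last m) = T →
      (∀ i : Fin m, t i.succ - t i.castSucc < δ) →
      ‖(∑ i : Fin m,
          (Real.exp (-O (t i.castSucc)) • (X (t i.succ) - X (t i.castSucc)) -
            (Real.exp (-O (t i.castSucc)) * (O (t i.succ) - O (t i.castSucc))) •
              X (t i.castSucc)))
        - (Real.exp (-O T) • X T - Real.exp (-O 0) • X 0)‖ < ε := by
  obtain ⟨CO, hCO, hO⟩ := hO
  obtain ⟨CX, hCX, hX⟩ := hX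
  intro ε hε
  obtain ⟨δ, hδ, hlocal⟩ := exists_forall_norm_expNeg_smul_defect_le hα.1 hCO.le hCX.le hO hX
    (by positivity : 0 < ε / (2 * T))
  refine ⟨δ, hδ, fun m t ht ht0 htT hmesh => ?_⟩
  have hmem (j : Fin (m + 1)) : t j ∈ Icc 0 T :=
    ⟨ht0 ▸ ht.monotone (Fin.zero_le j), htT ▸ ht.monotone (Fin.le_last j)⟩
  have hsum := norm_sum_sub_telescope_le _ (fun j => exp (-O (t j)) • X (t j)) t
    fun i => hlocal _ (hmem _) _ (hmem _) (ht Fin.castSucc_lt_succ) (hmesh i)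
  simp only [ht0, htT, sub_zero] at hsum
  calc _ ≤ ε / (2 * T) * T := hsum
    _ < ε := by field_simp; linarith
end

section
/- Let L > 0, let f : ℝ^d → ℝ^d satisfy the one-sided dissipative Lipschitz condition with constant L, let a ∈ ℝ with a ≠ 0, b ∈ ℝ^d, and let O : ℝ → ℝ be continuous. Let U₁, U₂ : [0, ∞) → ℝ^d be differentiable with U_i'(t) = e^{−aO(t)} f(e^{aO(t)} U_i(t) + (b/a)(e^{aO(t)} − 1)) + (a U_i(t) + b) O(t) for i = 1, 2 and all t ≥ 0. Then for all t ≥ 0, ‖U₁(t) − U₂(t)‖² ≤ exp(−2Lt + 2a∫_0^t O(τ) dτ) · ‖U₁(0) − U₂(0)‖². -/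
open Real RealInnerProductSpace

/-!
Along two solutions, the difference `V = U₁ - U₂` satisfies
`⟪V, V'⟫ ≤ (-L + a O) ‖V‖²`: the change of variables `x = e^{aO} U + (b/a)(e^{aO} - 1)` is a
positive rescaling of differences, so the dissipativity of `f` survives it, while the linear
term `(aU + b) O` contributes `a O ‖V‖²`. The integrating factor `exp(-2∫₀ᵗ(-L + a O))` then
makes `‖V‖²` non-increasing.
-/

theorem norm_sq_le_exp_integral_mul_of_inner_deriv_le {E : Type*} [NormedAddCommGroup E]
    [InnerProductSpace ℝ E] {V V' : ℝ → E} {k : ℝ → ℝ} (hk : Continuous k)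
    (hV : ∀ s, 0 ≤ s → HasDerivAt V (V' s) s)
    (hVk : ∀ s, 0 ≤ s → ⟪V s, V' s⟫ ≤ k s * ‖V s‖ ^ 2) {t : ℝ} (ht : 0 ≤ t) :
    ‖V t‖ ^ 2 ≤ exp (2 * ∫ τ in (0:ℝ)..t, k τ) * ‖V 0‖ ^ 2 := by
  set K : ℝ → ℝ := fun s => ∫ τ in (0:ℝ)..s, k τ
  set W : ℝ → ℝ := fun s => exp (-(2 * K s)) * ‖V s‖ ^ 2
  have hW : ∀ s, 0 ≤ s → HasDerivAt W
      (exp (-(2 * K s)) * -(2 * k s) * ‖V s‖ ^ 2 + exp (-(2 * K s)) * (2 * ⟪V s, V' s⟫)) s :=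
    fun s hs => ((hk.integral_hasStrictDerivAt 0 s).hasDerivAt.const_mul 2).neg.exp.mul
      (hV s hs).norm_sq
  have hW_anti : AntitoneOn W (Set.Ici 0) := by
    refine antitoneOn_of_hasDerivWithinAt_nonpos (convex_Ici 0)
      (fun s hs => (hW s hs).continuousAt.continuousWithinAt)
      (fun s hs => (hW s (interior_subset hs)).hasDerivWithinAt) fun s hs => ?_
    nlinarith [hVk s (interior_subset hs), exp_pos (-(2 * K s))]
  calc ‖V t‖ ^ 2 = exp (2 * K t) * W t := by
        simp only [W, ← mul_assoc, ← exp_add, add_neg_cancel, exp_zero, one_mul]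
    _ ≤ exp (2 * K t) * W 0 := by
        gcongr
        exact hW_anti Set.self_mem_Ici ht ht
    _ = exp (2 * K t) * ‖V 0‖ ^ 2 := by simp [W, K]

theorem inner_sub_smul_comp_affine_le {E : Type*} [NormedAddCommGroup E]
    [InnerProductSpace ℝ E] {f : E → E} {L : ℝ}
    (hf : ∀ x y, ⟪x - y, f x - f y⟫ ≤ -L * ‖x - y‖ ^ 2) {c : ℝ} (hc : 0 < c) (w u₁ u₂ : E) :
    ⟪u₁ - u₂, c⁻¹ • (f (c • u₁ + w) - f (c • u₂ + w))⟫ ≤ -L * ‖u₁ - u₂‖ ^ 2 := by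
  have h := hf (c • u₁ + w) (c • u₂ + w)
  rw [add_sub_add_right_eq_sub, ← smul_sub, real_inner_smul_left, norm_smul,
    Real.norm_of_nonneg hc.le] at h
  rw [real_inner_smul_right]
  calc c⁻¹ * ⟪u₁ - u₂, f (c • u₁ + w) - f (c • u₂ + w)⟫
      = c⁻¹ * c⁻¹ * (c * ⟪u₁ - u₂, f (c • u₁ + w) - f (c • u₂ + w)⟫) := by field_simp
    _ ≤ c⁻¹ * c⁻¹ * (-L * (c * ‖u₁ - u₂‖) ^ 2) := by gcongr
    _ = -L * ‖u₁ - u₂‖ ^ 2 := by field_simp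

-- The right-hand side of the transformed equation at time `t`, where `o` stands for `O t`.
noncomputable def transformedField {E : Type*} [NormedAddCommGroup E] [InnerProductSpace ℝ E]
    (f : E → E) (a : ℝ) (b : E) (o : ℝ) (u : E) : E :=
  exp (-(a * o)) • f (exp (a * o) • u + (exp (a * o) - 1) • (a⁻¹ • b)) + o • (a • u + b)

theorem inner_sub_transformedField_le {E : Type*} [NormedAddCommGroup E]
    [InnerProductSpace ℝ E] {f : E → E} {L : ℝ}
    (hf : ∀ x y, ⟪x - y, f x - f y⟫ ≤ -L * ‖x - y‖ ^ 2) (a : ℝ) (b : E) (o : ℝ) (u₁ u₂ : E) :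
    ⟪u₁ - u₂, transformedField f a b o u₁ - transformedField f a b o u₂⟫ ≤
      (-L + a * o) * ‖u₁ - u₂‖ ^ 2 := by
  set c := exp (a * o)
  set w := (c - 1) • (a⁻¹ • b)
  have hsplit : transformedField f a b o u₁ - transformedField f a b o u₂ =
      c⁻¹ • (f (c • u₁ + w) - f (c • u₂ + w)) + (a * o) • (u₁ - u₂) := by
    simp only [transformedField, exp_neg]
    module
  rw [hsplit, inner_add_right, real_inner_smul_right _ (u₁ - u₂), real_inner_self_eq_norm_sq]
  linarith [inner_sub_smul_comp_affine_le hf (exp_pos (a * o)) w u₁ u₂]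

theorem stmt_11_general {d : ℕ} (L : ℝ)
    (f : EuclideanSpace ℝ (Fin d) → EuclideanSpace ℝ (Fin d))
    (hf : ∀ x y : EuclideanSpace ℝ (Fin d), ⟪x - y, f x - f y⟫ ≤ -L * ‖x - y‖ ^ 2)
    (a : ℝ) (b : EuclideanSpace ℝ (Fin d))
    (O : ℝ → ℝ) (hO : Continuous O)
    (U₁ U₂ : ℝ → EuclideanSpace ℝ (Fin d))
    (hU₁ : ∀ t : ℝ, 0 ≤ t → HasDerivAt U₁
      (Real.exp (-(a * O t)) •
          f (Real.exp (a * O t) • U₁ t + (Real.exp (a * O t) - 1) • (a⁻¹ • b))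
        + O t • (a • U₁ t + b)) t)
    (hU₂ : ∀ t : ℝ, 0 ≤ t → HasDerivAt U₂
      (Real.exp (-(a * O t)) •
          f (Real.exp (a * O t) • U₂ t + (Real.exp (a * O t) - 1) • (a⁻¹ • b))
        + O t • (a • U₂ t + b)) t) :
    ∀ t : ℝ, 0 ≤ t →
      ‖U₁ t - U₂ t‖ ^ 2 ≤
        Real.exp (-(2 * L * t) + 2 * a * ∫ τ in (0:ℝ)..t, O τ) *
          ‖U₁ 0 - U₂ 0‖ ^ 2 := by
  intro t ht
  have h_integral : ∫ τ in (0:ℝ)..t, (-L + a * O τ) = -(L * t) + a * ∫ τ in (0:ℝ)..t, O τ := by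
    rw [intervalIntegral.integral_add intervalIntegrable_const
      ((hO.intervalIntegrable _ _).const_mul a), intervalIntegral.integral_const,
      intervalIntegral.integral_const_mul, sub_zero, smul_eq_mul]
    ring
  rw [show -(2 * L * t) + 2 * a * ∫ τ in (0:ℝ)..t, O τ = 2 * ∫ τ in (0:ℝ)..t, (-L + a * O τ) by
    rw [h_integral]; ring]
  exact norm_sq_le_exp_integral_mul_of_inner_deriv_le
    (continuous_const.add (continuous_const.mul hO)) (fun s hs => (hU₁ s hs).sub (hU₂ s hs))
    (fun s _ => inner_sub_transformedField_le hf a b (O s) (U₁ s) (U₂ s)) ht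

/-- Pathwise contraction estimate: any two solutions of the transformed random
differential equation satisfy
`‖U₁(t) − U₂(t)‖² ≤ exp(−2Lt + 2a∫₀ᵗ O) ‖U₁(0) − U₂(0)‖²`. -/
theorem stmt_11 {d : ℕ} (L : ℝ) (hL : 0 < L)
    (f : EuclideanSpace ℝ (Fin d) → EuclideanSpace ℝ (Fin d))
    (hf : ∀ x y : EuclideanSpace ℝ (Fin d), ⟪x - y, f x - f y⟫ ≤ -L * ‖x - y‖ ^ 2)
    (a : ℝ) (ha : a ≠ 0) (b : EuclideanSpace ℝ (Fin d))
    (O : ℝ → ℝ) (hO : Continuous O)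
    (U₁ U₂ : ℝ → EuclideanSpace ℝ (Fin d))
    (hU₁ : ∀ t : ℝ, 0 ≤ t → HasDerivAt U₁
      (Real.exp (-(a * O t)) •
          f (Real.exp (a * O t) • U₁ t + (Real.exp (a * O t) - 1) • (a⁻¹ • b))
        + O t • (a • U₁ t + b)) t)
    (hU₂ : ∀ t : ℝ, 0 ≤ t → HasDerivAt U₂
      (Real.exp (-(a * O t)) •
          f (Real.exp (a * O t) • U₂ t + (Real.exp (a * O t) - 1) • (a⁻¹ • b))
        + O t • (a • U₂ t + b)) t) :
    ∀ t : ℝ, 0 ≤ t →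
      ‖U₁ t - U₂ t‖ ^ 2 ≤
        Real.exp (-(2 * L * t) + 2 * a * ∫ τ in (0:ℝ)..t, O τ) *
          ‖U₁ 0 - U₂ 0‖ ^ 2 :=
  stmt_11_general L f hf a b O hO U₁ U₂ hU₁ hU₂
end

section
/- Let L > 0, let f : ℝ^d → ℝ^d satisfy the one-sided dissipative Lipschitz condition with constant L, let a ∈ ℝ with a ≠ 0, b ∈ ℝ^d, and let O : ℝ → ℝ be continuous. Let U : ℝ → ℝ^d be differentiable with U'(t) = e^{−aO(t)} f(e^{aO(t)} U(t) + (b/a)(e^{aO(t)} − 1)) + (a U(t) + b) O(t) for all t. Then for every t, 2⟨U(t), U'(t)⟩ ≤ (−L + 2aO(t)) ‖U(t)‖² + (2/L)( e^{−2aO(t)} ‖f((b/a)(e^{aO(t)} − 1))‖² + ‖b‖² O(t)² ). -/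
open Real RealInnerProductSpace

/-- Pointwise energy estimate for a solution of the transformed random
differential equation:
`(d/dt)‖U‖² ≤ (−L + 2aO_t)‖U‖² + (2/L)(e^{−2aO_t}‖f((b/a)(e^{aO_t}−1))‖² + ‖b‖²O_t²)`. -/
theorem stmt_14 {d : ℕ} (L : ℝ) (hL : 0 < L)
    (f : EuclideanSpace ℝ (Fin d) → EuclideanSpace ℝ (Fin d))
    (hf : ∀ x y : EuclideanSpace ℝ (Fin d), ⟪x - y, f x - f y⟫ ≤ -L * ‖x - y‖ ^ 2)
    (a : ℝ) (ha : a ≠ 0) (b : EuclideanSpace ℝ (Fin d))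
    (O : ℝ → ℝ) (hO : Continuous O)
    (U : ℝ → EuclideanSpace ℝ (Fin d))
    (hU : ∀ t : ℝ, HasDerivAt U
      (Real.exp (-(a * O t)) •
          f (Real.exp (a * O t) • U t + (Real.exp (a * O t) - 1) • (a⁻¹ • b))
        + O t • (a • U t + b)) t) :
    ∀ t : ℝ,
      2 * ⟪U t, deriv U t⟫ ≤
        (-L + 2 * a * O t) * ‖U t‖ ^ 2 +
          (2 / L) * (Real.exp (-(2 * a * O t)) *
              ‖f ((Real.exp (a * O t) - 1) • (a⁻¹ • b))‖ ^ 2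
            + ‖b‖ ^ 2 * (O t) ^ 2) := by
  intro t
  rw [(hU t).deriv]
  set s : ℝ := O t with hs
  set c : EuclideanSpace ℝ (Fin d) := (Real.exp (a * s) - 1) • (a⁻¹ • b) with hc
  set x : EuclideanSpace ℝ (Fin d) := Real.exp (a * s) • U t + c with hx
  set E : ℝ := Real.exp (a * s) with hE
  have hEpos : 0 < E := Real.exp_pos _
  have hdis := hf x c
  have hxc : x - c = E • U t := by simp [hx]
  rw [hxc, real_inner_smul_left, inner_sub_right, norm_smul] at hdis
  have hE1 : Real.exp (-(a * s)) = E⁻¹ := by rw [Real.exp_neg]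
  have hE2 : Real.exp (-(2 * a * s)) = E⁻¹ * E⁻¹ := by
    rw [hE, ← Real.exp_neg, ← Real.exp_add]
    congr 1; ring
  rw [hE1, hE2]
  rw [inner_add_right, real_inner_smul_right, real_inner_smul_right, inner_add_right,
    real_inner_smul_right, real_inner_self_eq_norm_sq]
  rw [Real.norm_eq_abs, abs_of_pos hEpos] at hdis
  clear_value s c x E
  clear hf hU hO hE1 hE2 hxc hc hx hE hs
  have h1 : ⟪U t, f c⟫ ≤ ‖U t‖ * ‖f c‖ := real_inner_le_norm _ _
  have h2 : s * ⟪U t, b⟫ ≤ |s| * (‖U t‖ * ‖b‖) := by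
    calc s * ⟪U t, b⟫ ≤ |s * ⟪U t, b⟫| := le_abs_self _
    _ = |s| * |⟪U t, b⟫| := abs_mul _ _
    _ ≤ |s| * (‖U t‖ * ‖b‖) := by
        exact mul_le_mul_of_nonneg_left (abs_real_inner_le_norm _ _) (abs_nonneg _)
  have habs : |s| ^ 2 = s ^ 2 := sq_abs s
  have hfx : ⟪U t, f x⟫ ≤ ⟪U t, f c⟫ - L * E * ‖U t‖ ^ 2 := by
    nlinarith [hdis, sq_nonneg E, hEpos]
  have hEinv : 0 < E⁻¹ := by positivity
  have key1 : 2 * (E⁻¹ * ⟪U t, f c⟫) ≤ L / 2 * ‖U t‖ ^ 2 + 2 / L * (E⁻¹ * E⁻¹ * ‖f c‖ ^ 2) := by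
    have h3 : 2 * (E⁻¹ * ⟪U t, f c⟫) ≤ 2 * (E⁻¹ * (‖U t‖ * ‖f c‖)) := by
      nlinarith [h1, hEinv]
    have h4 : 2 * (‖U t‖ * (E⁻¹ * ‖f c‖)) ≤ L / 2 * ‖U t‖ ^ 2 + 2 / L * (E⁻¹ * ‖f c‖) ^ 2 := by
      rw [← sub_nonneg]
      have heq : L / 2 * ‖U t‖ ^ 2 + 2 / L * (E⁻¹ * ‖f c‖) ^ 2
          - 2 * (‖U t‖ * (E⁻¹ * ‖f c‖))
          = (L * ‖U t‖ - 2 * (E⁻¹ * ‖f c‖)) ^ 2 / (2 * L) := by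
        field_simp; ring
      rw [heq]; positivity
    nlinarith [h3, h4]
  have key2' : ∀ m : ℝ, 2 * (m * (‖U t‖ * ‖b‖)) ≤ L / 2 * ‖U t‖ ^ 2 + 2 / L * (‖b‖ ^ 2 * m ^ 2) := by
    intro m
    rw [← sub_nonneg]
    have heq : L / 2 * ‖U t‖ ^ 2 + 2 / L * (‖b‖ ^ 2 * m ^ 2) - 2 * (m * (‖U t‖ * ‖b‖))
        = (L * ‖U t‖ - 2 * (m * ‖b‖)) ^ 2 / (2 * L) := by
      field_simp; ring
    rw [heq]; positivity
  have key2 : 2 * (|s| * (‖U t‖ * ‖b‖)) ≤ L / 2 * ‖U t‖ ^ 2 + 2 / L * (‖b‖ ^ 2 * s ^ 2) := by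
    have := key2' |s|
    rw [sq_abs] at this
    exact this
  have hfx' : 2 * (E⁻¹ * ⟪U t, f x⟫) ≤ 2 * (E⁻¹ * ⟪U t, f c⟫) - 2 * L * ‖U t‖ ^ 2 := by
    have h6 := mul_le_mul_of_nonneg_left hfx hEinv.le
    have h7 : E⁻¹ * (⟪U t, f c⟫ - L * E * ‖U t‖ ^ 2) = E⁻¹ * ⟪U t, f c⟫ - L * ‖U t‖ ^ 2 := by
      field_simp
    rw [h7] at h6
    linarith
  nlinarith [key1, key2, hfx', h2]
end

section
/- Let L > 0, κ > 0, let f, g : ℝ^d → ℝ^d each satisfy the one-sided dissipative Lipschitz condition with constant L, let a₁, a₂ ∈ ℝ with a₁, a₂ ≠ 0, b₁, b₂ ∈ ℝ^d, and let O¹, O² : ℝ → ℝ be continuous. Define F(u, z) := e^{−a₁ z} f(e^{a₁ z} u + (b₁/a₁)(e^{a₁ z} − 1)) + (a₁ u + b₁) z and G(v, z) := e^{−a₂ z} g(e^{a₂ z} v + (b₂/a₂)(e^{a₂ z} − 1)) + (a₂ v + b₂) z. Let (U₁, V₁) and (U₂, V₂) be differentiable ℝ^d-valued solutions of the coupled system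 U' = F(U, O¹(t)) + κ(V − U), V' = G(V, O²(t)) + κ(U − V). Then for every t: 2⟨U₁(t) − U₂(t), U₁'(t) − U₂'(t)⟩ ≤ (−2L − κ + 2a₁O¹(t))‖U₁(t) − U₂(t)‖² + κ‖V₁(t) − V₂(t)‖², and 2⟨V₁(t) − V₂(t), V₁'(t) − V₂'(t)⟩ ≤ (−2L − κ + 2a₂O²(t))‖V₁(t) − V₂(t)‖² + κ‖U₁(t) − U₂(t)‖². -/
open Real RealInnerProductSpace

private lemma aux_key {d : ℕ} {L κ a z : ℝ} (hL : 0 < L) (hκ : 0 < κ)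
    {f : EuclideanSpace ℝ (Fin d) → EuclideanSpace ℝ (Fin d)}
    (hf : ∀ x y : EuclideanSpace ℝ (Fin d), ⟪x - y, f x - f y⟫ ≤ -L * ‖x - y‖ ^ 2)
    (b c u u' w w' : EuclideanSpace ℝ (Fin d)) :
    2 * ⟪u - u',
      (Real.exp (-(a * z)) • f (Real.exp (a * z) • u + c) + z • (a • u + b) + κ • (w - u)) -
      (Real.exp (-(a * z)) • f (Real.exp (a * z) • u' + c) + z • (a • u' + b) + κ • (w' - u'))⟫ ≤
      (-(2 * L) - κ + 2 * a * z) * ‖u - u'‖ ^ 2 + κ * ‖w - w'‖ ^ 2 := by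
  set e := Real.exp (a * z) with he
  set e' := Real.exp (-(a * z)) with he'
  have hee : e' * e = 1 := by
    rw [he, he', ← Real.exp_add]; simp
  set X := e • u + c with hXdef
  set X' := e • u' + c with hX'def
  have hX : X - X' = e • (u - u') := by rw [hXdef, hX'def, smul_sub]; abel
  have hD : u - u' = e' • (X - X') := by
    rw [hX, smul_smul, hee, one_smul]
  have h1 : ⟪u - u', e' • f X - e' • f X'⟫ ≤ -L * ‖u - u'‖ ^ 2 := by
    have hfXX := hf X X'
    have hnorm : ‖X - X'‖ = e * ‖u - u'‖ := by
      rw [hX, norm_smul, Real.norm_eq_abs, abs_of_pos (Real.exp_pos _)]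
    calc ⟪u - u', e' • f X - e' • f X'⟫
        = e' * (e' * ⟪X - X', f X - f X'⟫) := by
          rw [← smul_sub]
          nth_rewrite 1 [hD]
          rw [real_inner_smul_left, real_inner_smul_right]
      _ ≤ e' * (e' * (-L * ‖X - X'‖ ^ 2)) := by
          have h0 : (0:ℝ) ≤ e' := (Real.exp_pos _).le
          exact mul_le_mul_of_nonneg_left (mul_le_mul_of_nonneg_left hfXX h0) h0
      _ = -L * ‖u - u'‖ ^ 2 := by
          rw [hnorm]
          linear_combination (-(L * ‖u - u'‖ ^ 2) * (e' * e + 1)) * hee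
  have h2 : ⟪u - u', z • (a • u + b) - z • (a • u' + b)⟫ = (a * z) * ‖u - u'‖ ^ 2 := by
    have h : z • (a • u + b) - z • (a • u' + b) = (a * z) • (u - u') := by module
    rw [h, real_inner_smul_right, real_inner_self_eq_norm_sq]
  have h3 : ⟪u - u', κ • (w - u) - κ • (w' - u')⟫ ≤
      κ * (‖u - u'‖ * ‖w - w'‖) - κ * ‖u - u'‖ ^ 2 := by
    have h : κ • (w - u) - κ • (w' - u') = κ • (w - w') - κ • (u - u') := by module
    rw [h, inner_sub_right, real_inner_smul_right, real_inner_smul_right,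
      real_inner_self_eq_norm_sq]
    have hcs := real_inner_le_norm (u - u') (w - w')
    nlinarith
  have hsum : (e' • f X + z • (a • u + b) + κ • (w - u)) -
      (e' • f X' + z • (a • u' + b) + κ • (w' - u')) =
      (e' • f X - e' • f X') + (z • (a • u + b) - z • (a • u' + b)) +
        (κ • (w - u) - κ • (w' - u')) := by abel
  rw [hsum, inner_add_right, inner_add_right]
  nlinarith [mul_nonneg hκ.le (sq_nonneg (‖u - u'‖ - ‖w - w'‖)), h1, h2, h3]

/-- Differential inequalities for the difference of two solutions of the coupled
transformed system with coupling intensity `κ`. -/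
theorem stmt_16 {d : ℕ} (L κ : ℝ) (hL : 0 < L) (hκ : 0 < κ)
    (f g : EuclideanSpace ℝ (Fin d) → EuclideanSpace ℝ (Fin d))
    (hf : ∀ x y : EuclideanSpace ℝ (Fin d), ⟪x - y, f x - f y⟫ ≤ -L * ‖x - y‖ ^ 2)
    (hg : ∀ x y : EuclideanSpace ℝ (Fin d), ⟪x - y, g x - g y⟫ ≤ -L * ‖x - y‖ ^ 2)
    (a₁ a₂ : ℝ) (ha₁ : a₁ ≠ 0) (ha₂ : a₂ ≠ 0) (b₁ b₂ : EuclideanSpace ℝ (Fin d))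
    (O₁ O₂ : ℝ → ℝ) (hO₁ : Continuous O₁) (hO₂ : Continuous O₂)
    (F G : EuclideanSpace ℝ (Fin d) → ℝ → EuclideanSpace ℝ (Fin d))
    (hF : ∀ u z, F u z =
      Real.exp (-(a₁ * z)) •
          f (Real.exp (a₁ * z) • u + (Real.exp (a₁ * z) - 1) • (a₁⁻¹ • b₁))
        + z • (a₁ • u + b₁))
    (hG : ∀ v z, G v z =
      Real.exp (-(a₂ * z)) •
          g (Real.exp (a₂ * z) • v + (Real.exp (a₂ * z) - 1) • (a₂⁻¹ • b₂))
        + z • (a₂ • v + b₂))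
    (U₁ V₁ U₂ V₂ : ℝ → EuclideanSpace ℝ (Fin d))
    (hU₁ : ∀ t : ℝ, HasDerivAt U₁ (F (U₁ t) (O₁ t) + κ • (V₁ t - U₁ t)) t)
    (hV₁ : ∀ t : ℝ, HasDerivAt V₁ (G (V₁ t) (O₂ t) + κ • (U₁ t - V₁ t)) t)
    (hU₂ : ∀ t : ℝ, HasDerivAt U₂ (F (U₂ t) (O₁ t) + κ • (V₂ t - U₂ t)) t)
    (hV₂ : ∀ t : ℝ, HasDerivAt V₂ (G (V₂ t) (O₂ t) + κ • (U₂ t - V₂ t)) t) :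
    ∀ t : ℝ,
      2 * ⟪U₁ t - U₂ t, deriv U₁ t - deriv U₂ t⟫ ≤
          (-(2 * L) - κ + 2 * a₁ * O₁ t) * ‖U₁ t - U₂ t‖ ^ 2 +
            κ * ‖V₁ t - V₂ t‖ ^ 2 ∧
      2 * ⟪V₁ t - V₂ t, deriv V₁ t - deriv V₂ t⟫ ≤
          (-(2 * L) - κ + 2 * a₂ * O₂ t) * ‖V₁ t - V₂ t‖ ^ 2 +
            κ * ‖U₁ t - U₂ t‖ ^ 2 := by
  intro t
  constructor
  · rw [(hU₁ t).deriv, (hU₂ t).deriv, hF, hF]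
    exact aux_key hL hκ hf b₁ _ (U₁ t) (U₂ t) (V₁ t) (V₂ t)
  · rw [(hV₁ t).deriv, (hV₂ t).deriv, hG, hG]
    exact aux_key hL hκ hg b₂ _ (V₁ t) (V₂ t) (U₁ t) (U₂ t)
end

section
/- Let L > 0 and let p, q : ℝ → ℝ be continuous with (1/t)∫_0^t p(τ) dτ → 0 and (1/t)∫_0^t q(τ) dτ → 0 as t → +∞. For κ ∈ ℝ and t ≥ 0 define the symmetric 2×2 matrix B_κ(t) with entries B_κ(t)₁₁ = (−2L − κ)t + ∫_0^t p(τ) dτ, B_κ(t)₂₂ = (−2L − κ)t + ∫_0^t q(τ) dτ, and B_κ(t)₁₂ = B_κ(t)₂₁ = κt. Then there exists T > 0 such that for all t ≥ T, all κ ≥ 1, and all m ∈ ℝ², ‖exp(B_κ(t)) · m‖ ≤ e^{−Lt} ‖m‖, where exp is the matrix exponential and ‖·‖ the Euclidean norm on ℝ². -/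
open Real Matrix Filter

/-!
Since `B_κ(t)` is symmetric, `‖exp(B_κ(t))‖` equals `e^λ` for its largest eigenvalue `λ`. Bounding
the Rayleigh quotient, `λ ≤ max(B₁₁, B₂₂) + |B₁₂| ≤ (−2L − κ)t + Lt + κt = −Lt`, as soon as `t` is
so large that `∫₀ᵗ p` and `∫₀ᵗ q` are at most `Lt`; the coupling `κ` cancels, which makes the
bound uniform in `κ`.
-/

open scoped Matrix.Norms.L2Operator in
theorem Matrix.IsHermitian.norm_exp_mulVec_le {n : Type*} [Fintype n] [DecidableEq n]
    {A : Matrix n n ℝ} (hA : A.IsHermitian) {β : ℝ} (hβ : ∀ i, hA.eigenvalues i ≤ β)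
    (x : EuclideanSpace ℝ n) :
    ‖(EuclideanSpace.equiv n ℝ).symm (NormedSpace.exp A *ᵥ EuclideanSpace.equiv n ℝ x)‖ ≤
      Real.exp β * ‖x‖ := by
  refine (l2_opNorm_mulVec _ x).trans (mul_le_mul_of_nonneg_right ?_ (norm_nonneg x))
  rw [← CFC.real_exp_eq_normedSpace_exp hA.isSelfAdjoint]
  refine norm_cfc_le (Real.exp_pos β).le fun y hy => ?_
  obtain ⟨i, rfl⟩ := hA.spectrum_real_eq_range_eigenvalues ▸ hy
  rw [Real.norm_of_nonneg (Real.exp_pos _).le]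
  exact Real.exp_le_exp.mpr (hβ i)

theorem Matrix.IsHermitian.eigenvalues_le_of_forall_dotProduct_mulVec_le {n : Type*} [Fintype n]
    [DecidableEq n] {A : Matrix n n ℝ} (hA : A.IsHermitian) {β : ℝ}
    (h : ∀ x, x ⬝ᵥ (A *ᵥ x) ≤ β * (x ⬝ᵥ x)) (i : n) : hA.eigenvalues i ≤ β := by
  set v := hA.eigenvectorBasis i
  have hv : (v : n → ℝ) ⬝ᵥ v = 1 := by
    have h1 : inner ℝ v v = 1 := by
      rw [real_inner_self_eq_norm_sq, hA.eigenvectorBasis.orthonormal.1 i, one_pow]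
    rwa [EuclideanSpace.inner_eq_star_dotProduct, star_trivial] at h1
  have h_eig := hA.eigenvalues_eq i
  simp only [star_trivial, RCLike.re_to_real] at h_eig
  simpa [h_eig, hv] using h v

theorem two_mul_mul_le_abs_mul_add_sq (c x y : ℝ) :
    2 * (c * (x * y)) ≤ |c| * (x ^ 2 + y ^ 2) := by
  rcases abs_cases c with ⟨hc, -⟩ | ⟨hc, hc_neg⟩ <;> rw [hc]
  · nlinarith [mul_nonneg (abs_nonneg c) (sq_nonneg (x - y))]
  · nlinarith [mul_nonneg (neg_nonneg.mpr hc_neg.le) (sq_nonneg (x + y))]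

theorem Matrix.IsHermitian.eigenvalues_le_fin_two {A : Matrix (Fin 2) (Fin 2) ℝ}
    (hA : A.IsHermitian) {M : ℝ} (h₀₀ : A 0 0 ≤ M) (h₁₁ : A 1 1 ≤ M) (i : Fin 2) :
    hA.eigenvalues i ≤ M + |A 0 1| := by
  refine hA.eigenvalues_le_of_forall_dotProduct_mulVec_le (fun x => ?_) i
  have h₁₀ : A 1 0 = A 0 1 := hA.apply 0 1
  simp only [dotProduct, mulVec, Fin.sum_univ_two, h₁₀]
  nlinarith [mul_le_mul_of_nonneg_right h₀₀ (sq_nonneg (x 0)),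
    mul_le_mul_of_nonneg_right h₁₁ (sq_nonneg (x 1)),
    two_mul_mul_le_abs_mul_add_sq (A 0 1) (x 0) (x 1)]

theorem eventually_le_mul_of_tendsto_inv_mul {g : ℝ → ℝ} {L : ℝ} (hL : 0 < L)
    (hg : Tendsto (fun t : ℝ => (1 / t) * g t) atTop (nhds 0)) :
    ∀ᶠ t in atTop, g t ≤ L * t := by
  filter_upwards [hg.eventually (gt_mem_nhds hL), eventually_gt_atTop 0] with t hgt ht
  calc g t = t * ((1 / t) * g t) := by field_simp
    _ ≤ t * L := by gcongr
    _ = L * t := mul_comm t L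

theorem stmt_18_general (L : ℝ) (hL : 0 < L) (p q : ℝ → ℝ)
    (hpavg : Tendsto (fun t : ℝ => (1 / t) * ∫ τ in (0:ℝ)..t, p τ) atTop (nhds 0))
    (hqavg : Tendsto (fun t : ℝ => (1 / t) * ∫ τ in (0:ℝ)..t, q τ) atTop (nhds 0))
    (B : ℝ → ℝ → Matrix (Fin 2) (Fin 2) ℝ)
    (hB11 : ∀ κ t, B κ t 0 0 = (-(2 * L) - κ) * t + ∫ τ in (0:ℝ)..t, p τ)
    (hB22 : ∀ κ t, B κ t 1 1 = (-(2 * L) - κ) * t + ∫ τ in (0:ℝ)..t, q τ)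
    (hB12 : ∀ κ t, B κ t 0 1 = κ * t)
    (hB21 : ∀ κ t, B κ t 1 0 = κ * t) :
    ∃ T > 0, ∀ t : ℝ, T ≤ t → ∀ κ : ℝ, 1 ≤ κ →
      ∀ m : EuclideanSpace ℝ (Fin 2),
        ‖(EuclideanSpace.equiv (Fin 2) ℝ).symm
            ((NormedSpace.exp (B κ t)).mulVec (EuclideanSpace.equiv (Fin 2) ℝ m))‖ ≤
          Real.exp (-(L * t)) * ‖m‖ := by
  obtain ⟨T, hT1, hT⟩ := (atTop_basis' 1).eventually_iff.mp
    ((eventually_le_mul_of_tendsto_inv_mul hL hpavg).and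
      (eventually_le_mul_of_tendsto_inv_mul hL hqavg))
  refine ⟨T, one_pos.trans_le hT1, fun t ht κ hκ m => ?_⟩
  obtain ⟨hp, hq⟩ := hT ht
  have hκt : |B κ t 0 1| = κ * t := by
    rw [hB12, abs_of_nonneg (by nlinarith)]
  have hB : (B κ t).IsHermitian := by
    refine Matrix.IsHermitian.ext fun i j => ?_
    fin_cases i <;> fin_cases j <;> simp [hB12, hB21]
  refine hB.norm_exp_mulVec_le (fun i => ?_) m
  have := hB.eigenvalues_le_fin_two (M := (-(2 * L) - κ) * t + L * t)
    (by rw [hB11]; linarith) (by rw [hB22]; linarith) i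
  linarith

/-- Uniform exponential estimate for the matrix exponential of the integrated
coefficient matrix of the coupled system: there is `T > 0` such that for all
`t ≥ T` and all coupling intensities `κ ≥ 1`,
`‖exp(B_κ(t)) m‖ ≤ e^{−Lt} ‖m‖` in the Euclidean norm on `ℝ²`. -/
theorem stmt_18 (L : ℝ) (hL : 0 < L) (p q : ℝ → ℝ)
    (hp : Continuous p) (hq : Continuous q)
    (hpavg : Tendsto (fun t : ℝ => (1 / t) * ∫ τ in (0:ℝ)..t, p τ) atTop (nhds 0))
    (hqavg : Tendsto (fun t : ℝ => (1 / t) * ∫ τ in (0:ℝ)..t, q τ) atTop (nhds 0))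
    (B : ℝ → ℝ → Matrix (Fin 2) (Fin 2) ℝ)
    (hB11 : ∀ κ t, B κ t 0 0 = (-(2 * L) - κ) * t + ∫ τ in (0:ℝ)..t, p τ)
    (hB22 : ∀ κ t, B κ t 1 1 = (-(2 * L) - κ) * t + ∫ τ in (0:ℝ)..t, q τ)
    (hB12 : ∀ κ t, B κ t 0 1 = κ * t)
    (hB21 : ∀ κ t, B κ t 1 0 = κ * t) :
    ∃ T > 0, ∀ t : ℝ, T ≤ t → ∀ κ : ℝ, 1 ≤ κ →
      ∀ m : EuclideanSpace ℝ (Fin 2),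
        ‖(EuclideanSpace.equiv (Fin 2) ℝ).symm
            ((NormedSpace.exp (B κ t)).mulVec (EuclideanSpace.equiv (Fin 2) ℝ m))‖ ≤
          Real.exp (-(L * t)) * ‖m‖ :=
  stmt_18_general L hL p q hpavg hqavg B hB11 hB22 hB12 hB21
end
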